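/- arXiv:1711.09399 — 2 statements merged into one kernel-verified Lean document; each statement's English description precedes it below -/
import Mathlib

section
/- Let p be a prime, h ≥ 1, let F_{p^h} be the field with p^h elements, let r ∈ F_{p^h}^× have multiplicative order n, and let G = F_{p^h} ⋊_r ℤ/nℤ. Then for every integer a, the number of elements g ∈ G with g^a = 1 equals gcd(a, p)^h + p^h·(gcd(a, n) − 1). -/
/-!
If every nontrivial element `y` of `G` acts on the abelian group `N` without nontrivial fixed
points, then for `y ≠ 1` with `y ^ k = 1` the norm `∏_{i<k} y^i • x` is fixed by `y`, hence
trivial. So `(x, y) ^ k = 1` holds for every `x` when `y ≠ 1` and `y ^ k = 1`, while for `y = 1`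
it means `x ^ k = 1`. Multiplication by `r ^ m` with `0 < m < n` has no nonzero fixed point
in `F`, and in `ZMod n`, resp. `F` of characteristic `p`, the `k`-torsion has `gcd(k, n)`,
resp. `gcd(k, p) ^ h`, elements.
-/

open Multiplicative

namespace MulAut

variable {N : Type*} [CommGroup N]

theorem prod_range_pow_apply_eq_one {σ : MulAut N} (hσ : ∀ x, σ x = x → x = 1) {k : ℕ}
    (hk : σ ^ k = 1) (x : N) : ∏ i ∈ Finset.range k, (σ ^ i) x = 1 := by
  set s := ∏ i ∈ Finset.range k, (σ ^ i) x
  -- σ shifts the factors cyclically, so it fixes their product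
  have hs : σ s = s := by
    have := Finset.prod_range_succ' (fun i => (σ ^ i) x) k
    rw [Finset.prod_range_succ, hk, pow_zero] at this
    simp only [map_prod, s, ← MulAut.mul_apply, ← pow_succ']
    exact (mul_right_cancel this).symm
  exact hσ s hs

end MulAut

namespace SemidirectProduct

variable {N G : Type*} [CommGroup N] [Group G] {φ : G →* MulAut N}

theorem right_pow (g : N ⋊[φ] G) (k : ℕ) : (g ^ k).right = g.right ^ k :=
  map_pow rightHom g k

theorem left_pow (g : N ⋊[φ] G) (k : ℕ) :
    (g ^ k).left = ∏ i ∈ Finset.range k, φ (g.right ^ i) g.left := by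
  induction k with
  | zero => rfl
  | succ k ih => rw [pow_succ, mul_left, ih, right_pow, Finset.prod_range_succ]

theorem pow_eq_one_iff (g : N ⋊[φ] G) (k : ℕ) :
    g ^ k = 1 ↔ g.right ^ k = 1 ∧ ∏ i ∈ Finset.range k, φ (g.right ^ i) g.left = 1 := by
  rw [SemidirectProduct.ext_iff, left_pow, right_pow, one_left, one_right, and_comm]

theorem card_pow_eq_one_of_fixedPointFree [Finite N] [Finite G]
    (hφ : ∀ y ≠ 1, ∀ x, φ y x = x → x = 1) (k : ℕ) :
    Nat.card {g : N ⋊[φ] G // g ^ k = 1} =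
      Nat.card {x : N // x ^ k = 1} + Nat.card N * (Nat.card {y : G // y ^ k = 1} - 1) := by
  classical
  have := Fintype.ofFinite G
  let Y := {y : G // y ^ k = 1}
  let fiber (y : Y) := {x : N // ∏ i ∈ Finset.range k, φ (y.1 ^ i) x = 1}
  have e : {g : N ⋊[φ] G // g ^ k = 1} ≃ Σ y : Y, fiber y :=
    { toFun g :=
        ⟨⟨g.1.right, ((pow_eq_one_iff _ _).1 g.2).1⟩, g.1.left, ((pow_eq_one_iff _ _).1 g.2).2⟩
      invFun s := ⟨⟨s.2.1, s.1.1⟩, (pow_eq_one_iff _ _).2 ⟨s.1.2, s.2.2⟩⟩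
      left_inv _ := rfl
      right_inv _ := rfl }
  let one : Y := ⟨1, one_pow k⟩
  have fiber_one : Nat.card (fiber one) = Nat.card {x : N // x ^ k = 1} := by
    simp [fiber, one]
  have fiber_ne_one (y : Y) (hy : y ≠ one) : Nat.card (fiber y) = Nat.card N := by
    refine Nat.card_congr (Equiv.subtypeUnivEquiv fun x => ?_)
    simp_rw [map_pow]
    exact MulAut.prod_range_pow_apply_eq_one (hφ y.1 fun h => hy (Subtype.ext h))
      (by rw [← map_pow, y.2, map_one]) x
  rw [Nat.card_congr e, Nat.card_sigma, Fintype.sum_eq_add_sum_compl one, fiber_one,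
    Finset.sum_congr rfl fun y hy => fiber_ne_one y (by simpa using hy),
    Finset.sum_const, Finset.card_compl, Finset.card_singleton, smul_eq_mul, mul_comm,
    Nat.card_eq_fintype_card (α := Y)]

end SemidirectProduct

theorem IsCyclic.card_pow_eq_one_eq_gcd {G : Type*} [CommGroup G] [IsCyclic G] [Finite G]
    (k : ℕ) :
    Nat.card {y : G // y ^ k = 1} = (Nat.card G).gcd k :=
  IsCyclic.card_powMonoidHom_ker G k

theorem card_nsmul_eq_zero_of_card_eq_prime_pow {F : Type*} [Field F] [Fintype F] {p h : ℕ}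
    (hp : p.Prime) (hF : Fintype.card F = p ^ h) (k : ℕ) :
    Nat.card {x : F // k • x = 0} = k.gcd p ^ h := by
  have := Fact.mk hp
  have := charP_of_card_eq_prime_pow hF
  simp_rw [nsmul_eq_mul]
  by_cases hpk : p ∣ k
  · have hk : (k : F) = 0 := (CharP.cast_eq_zero_iff F p k).2 hpk
    simp [hk, Nat.gcd_eq_right hpk, hF]
  · have hk : (k : F) ≠ 0 := mt (CharP.cast_eq_zero_iff F p k).1 hpk
    simp [hk, ((Nat.Prime.coprime_iff_not_dvd hp).2 hpk).symm]


section CyclicActionOnField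

variable {F : Type*} [Field F] {n : ℕ} {r : Fˣ}
  {ψ : Multiplicative (ZMod n) →* MulAut (Multiplicative F)}

theorem apply_ofAdd_natCast_eq_pow_mul
    (hψ : ∀ x : F, ψ (ofAdd (1 : ZMod n)) (ofAdd x) = ofAdd ((r : F) * x)) (m : ℕ) (x : F) :
    ψ (ofAdd (m : ZMod n)) (ofAdd x) = ofAdd ((r : F) ^ m * x) := by
  induction m generalizing x with
  | zero => simp
  | succ m ih =>
    rw [Nat.cast_succ, add_comm, ofAdd_add, map_mul, MulAut.mul_apply, ih, hψ, pow_succ',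
      mul_assoc]

theorem eq_one_of_apply_eq_self_of_orderOf_eq [NeZero n] (hr : orderOf r = n)
    (hψ : ∀ x : F, ψ (ofAdd (1 : ZMod n)) (ofAdd x) = ofAdd ((r : F) * x))
    (y : Multiplicative (ZMod n)) (hy : y ≠ 1) (x : Multiplicative F) (hx : ψ y x = x) :
    x = 1 := by
  set m := (toAdd y).val
  have hm0 : m ≠ 0 := fun h => hy (by simpa [m] using h)
  have hrm : (r : F) ^ m ≠ 1 := by
    rw [← Units.val_pow_eq_pow_val, Ne, Units.val_eq_one]
    exact pow_ne_one_of_lt_orderOf hm0 (hr ▸ ZMod.val_lt _)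
  have hy' : y = ofAdd (m : ZMod n) := by simp [m]
  rw [hy', ← ofAdd_toAdd x, apply_ofAdd_natCast_eq_pow_mul hψ] at hx
  by_contra hx1
  exact hrm ((mul_eq_right₀ (by simpa using hx1)).1 (ofAdd.injective hx))

end CyclicActionOnField

theorem card_solutions_pow_eq_one_semidirect_field_general
    (p h : ℕ) (hp : p.Prime)
    (F : Type) [Field F] [Fintype F] (hF : Fintype.card F = p ^ h)
    (n : ℕ) (r : Fˣ) (hr : orderOf r = n)
    (ψ : Multiplicative (ZMod n) →* MulAut (Multiplicative F))
    (hψ : ∀ x : F, ψ (ofAdd (1 : ZMod n)) (ofAdd x) = ofAdd ((r : F) * x))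
    (a : ℤ) :
    Nat.card {g : Multiplicative F ⋊[ψ] Multiplicative (ZMod n) // g ^ a = 1}
      = Int.gcd a p ^ h + p ^ h * (Int.gcd a n - 1) := by
  have : NeZero n := ⟨hr ▸ (orderOf_pos r).ne'⟩
  simp_rw [← pow_natAbs_eq_one]
  have torsion_F : Nat.card {x : Multiplicative F // x ^ a.natAbs = 1} = a.natAbs.gcd p ^ h :=
    card_nsmul_eq_zero_of_card_eq_prime_pow hp hF _
  rw [SemidirectProduct.card_pow_eq_one_of_fixedPointFree
      (eq_one_of_apply_eq_self_of_orderOf_eq hr hψ),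
    IsCyclic.card_pow_eq_one_eq_gcd (G := Multiplicative (ZMod n)), torsion_F]
  simp [Int.gcd_eq_natAbs, hF, Nat.gcd_comm]

/-- Let `p` be a prime, `h ≥ 1`, let `F` be the field with `p^h`
elements, let `r ∈ Fˣ` have multiplicative order `n`, and let `G = F ⋊_r ℤ/nℤ`.
Then for every integer `a`, the number of `g ∈ G` with `g^a = 1` equals
`gcd(a, p)^h + p^h · (gcd(a, n) - 1)`. -/
theorem card_solutions_pow_eq_one_semidirect_field
    (p h : ℕ) (hp : p.Prime) (hh : 1 ≤ h)
    (F : Type) [Field F] [Fintype F] (hF : Fintype.card F = p ^ h)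
    (n : ℕ) (r : Fˣ) (hr : orderOf r = n)
    (ψ : Multiplicative (ZMod n) →* MulAut (Multiplicative F))
    (hψ : ∀ x : F, ψ (ofAdd (1 : ZMod n)) (ofAdd x) = ofAdd ((r : F) * x))
    (a : ℤ) :
    Nat.card {g : Multiplicative F ⋊[ψ] Multiplicative (ZMod n) // g ^ a = 1}
      = Int.gcd a p ^ h + p ^ h * (Int.gcd a n - 1) :=
  card_solutions_pow_eq_one_semidirect_field_general p h hp F hF n r hr ψ hψ a
end

section
/- Let p be a prime, h ≥ 1, let F_{p^h} be the field with p^h elements, let r ∈ F_{p^h}^× have multiplicative order n, let G = F_{p^h} ⋊_r ℤ/nℤ, and for an integer t let χ_t : G → ℂ^× be the group homomorphism sending (x, y) to ζ_n^{t·y}. Then for all integers a and b, the sum Σ_{g ∈ G, g^a = 1} χ_t(g^{−b}) equals gcd(a, p)^h − p^h + p^h·gcd(a, n) if gcd(a,n) divides t·b, and equals gcd(a, p)^h − p^h otherwise. -/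
/-!
An element `(x, y)` with `y ≠ 0` is conjugate to `(0, y)`: the action of `y` is multiplication
by `r ^ y ≠ 1`, so `w ↦ (1 - r ^ y) w` is onto `F`. Hence `(x, y) ^ a = 1` iff `a • y = 0`, for
each of the `p ^ h` values of `x`, while for `y = 0` the condition is `a x = 0`, which has
`gcd(a, p) ^ h` solutions. As `χ_t(g ^ (-b))` only depends on `y`, the sum is
`gcd(a, p) ^ h - p ^ h + p ^ h ∑_{a • y = 0} ζ_n ^ (-t b y)`. The kernel of `a` on `ℤ/nℤ` is the
subgroup generated by `n / gcd(a, n)`, of order `gcd(a, n)`, and the character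
`y ↦ ζ_n ^ (-t b y)` is trivial on it iff `gcd(a, n) ∣ t b`.
-/

open Multiplicative Finset

theorem Multiplicative.zpow_eq_one_iff {α : Type*} [AddGroup α] (x : Multiplicative α) (a : ℤ) :
    x ^ a = 1 ↔ a • toAdd x = 0 := by
  rw [← toAdd_eq_zero, toAdd_zpow]

namespace SemidirectProduct

variable {N G : Type*} [Group N] [Group G] {φ : G →* MulAut N}

theorem inl_mul_inr_mul_inl_inv (w : N) (y : G) :
    (inl w * inr y * (inl w)⁻¹ : N ⋊[φ] G) = ⟨w * φ y w⁻¹, y⟩ := by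
  ext <;> simp

theorem mk_zpow_eq_one_iff_of_surjective {y : G}
    (hy : Function.Surjective fun w : N => w * φ y w⁻¹) (x : N) (a : ℤ) :
    (⟨x, y⟩ : N ⋊[φ] G) ^ a = 1 ↔ y ^ a = 1 := by
  obtain ⟨w, rfl⟩ := hy x
  rw [← inl_mul_inr_mul_inl_inv, conj_zpow, conj_eq_one_iff, ← map_zpow,
    map_eq_one_iff _ inr_injective]

theorem mk_one_zpow_eq_one_iff (x : N) (a : ℤ) :
    (⟨x, 1⟩ : N ⋊[φ] G) ^ a = 1 ↔ x ^ a = 1 := by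
  rw [show (⟨x, 1⟩ : N ⋊[φ] G) = inl x from rfl, ← map_zpow, map_eq_one_iff _ inl_injective]

instance [Fintype N] [Fintype G] : Fintype (N ⋊[φ] G) := Fintype.ofEquiv _ equivProd.symm

theorem sum_ite_mk_zpow_eq_one [Fintype N] [DecidableEq N] [DecidableEq G]
    {R : Type*} [CommRing R] {y : G} (hy : y ≠ 1 → Function.Surjective fun w : N => w * φ y w⁻¹) (a : ℤ) (c : R) :
    ∑ x : N, (if (⟨x, y⟩ : N ⋊[φ] G) ^ a = 1 then c else 0) =
      Fintype.card N * (if y ^ a = 1 then c else 0) +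
        if y = 1 then (#{x : N | x ^ a = 1} - Fintype.card N : R) * c else 0 := by
  by_cases h1 : y = 1
  · subst h1
    simp only [mk_one_zpow_eq_one_iff, one_zpow, ← sum_filter, sum_const, nsmul_eq_mul, if_true]
    ring
  · simp only [mk_zpow_eq_one_iff_of_surjective (hy h1), h1, if_false, add_zero, sum_const,
      card_univ, nsmul_eq_mul]

theorem finsum_zpow_eq_one_right [Fintype N] [Fintype G] [DecidableEq N] [DecidableEq G]
    {R : Type*} [CommRing R] (hφ : ∀ y ≠ (1 : G), Function.Surjective fun w : N => w * φ y w⁻¹)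
    (a : ℤ) (f : G → R) :
    ∑ᶠ g ∈ {g : N ⋊[φ] G | g ^ a = 1}, f g.right =
      (#{x : N | x ^ a = 1} - Fintype.card N : R) * f 1 +
        Fintype.card N * ∑ y with y ^ a = 1, f y := by
  rw [finsum_mem_eq_toFinset_sum, Set.toFinset_ofPred, sum_filter,
    Fintype.sum_equiv equivProd (fun g => if g ^ a = 1 then f g.right else 0)
      (fun q : N × G => if (⟨q.1, q.2⟩ : N ⋊[φ] G) ^ a = 1 then f q.2 else 0) fun _ => rfl,
    Fintype.sum_prod_type_right,
    sum_congr rfl fun y _ => sum_ite_mk_zpow_eq_one (hφ y) a (f y), sum_add_distrib, ← mul_sum,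
    sum_ite_eq' univ (1 : G), if_pos (mem_univ _), sum_filter]
  ring

end SemidirectProduct

theorem AddChar.sum_addSubgroup_eq_ite {G R : Type*} [AddCommGroup G] [CommRing R] [IsDomain R]
    (ψ : AddChar G R) (H : AddSubgroup G) [Fintype H] [Decidable (∀ x ∈ H, ψ x = 1)] :
    ∑ x : H, ψ x = if ∀ x ∈ H, ψ x = 1 then (Nat.card H : R) else 0 := by
  classical
  have htriv : ψ.compAddMonoidHom H.subtype = 0 ↔ ∀ x ∈ H, ψ x = 1 := by
    simp [AddChar.ext_iff]
  simpa [htriv, Nat.card_eq_fintype_card] using (ψ.compAddMonoidHom H.subtype).sum_eq_ite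

namespace ZMod

theorem card_zmultiples_natCast {n d m : ℕ} [NeZero n] (hdm : d * m = n) :
    Nat.card (AddSubgroup.zmultiples (m : ZMod n)) = d := by
  have hm : 0 < m := Nat.pos_of_ne_zero fun h => NeZero.ne n (by rw [← hdm, h, mul_zero])
  rw [Nat.card_zmultiples, addOrderOf_coe _ (NeZero.ne n),
    Nat.gcd_eq_right (Dvd.intro_left d hdm), Nat.div_eq_of_eq_mul_left hm hdm.symm]

theorem intCast_mul_natCast_eq_zero_iff {n d m : ℕ} (hdm : d * m = n) (hm : m ≠ 0) (c : ℤ) :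
    (c : ZMod n) * m = 0 ↔ (d : ℤ) ∣ c := by
  rw [← Int.cast_natCast, ← Int.cast_mul, intCast_zmod_eq_zero_iff_dvd, ← hdm, Nat.cast_mul,
    Int.mul_dvd_mul_iff_right (by exact_mod_cast hm)]

theorem zsmul_eq_zero_iff_mem_zmultiples {n : ℕ} [NeZero n] (a : ℤ) (y : ZMod n) :
    a • y = 0 ↔ y ∈ AddSubgroup.zmultiples ((n / a.gcd n : ℕ) : ZMod n) := by
  set d := a.gcd n
  set m := n / d
  have hdm : (d : ℤ) * m = n := by
    exact_mod_cast Nat.mul_div_cancel' (Int.natCast_dvd_natCast.mp (Int.gcd_dvd_right a n))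
  constructor
  · intro h
    have hav : (n : ℤ) ∣ a * y.val := by
      rw [← intCast_zmod_eq_zero_iff_dvd]
      push_cast
      rwa [natCast_zmod_val, ← zsmul_eq_mul]
    have hdv : (d : ℤ) * m ∣ d * y.val := by
      rw [hdm, Int.coe_gcd, gcd_comm]
      exact dvd_gcd_mul_iff_dvd_mul.mpr hav
    have hd : (d : ℤ) ≠ 0 := by
      exact_mod_cast Int.gcd_ne_zero_right (by exact_mod_cast NeZero.ne n)
    obtain ⟨k, hk⟩ := Int.natCast_dvd_natCast.mp ((mul_dvd_mul_iff_left hd).mp hdv)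
    refine ⟨k, ?_⟩
    rw [← natCast_zmod_val y, hk]
    simp [mul_comm]
  · rintro ⟨k, rfl⟩
    obtain ⟨a', ha'⟩ := Int.gcd_dvd_left a n
    have ham : a • (m : ZMod n) = 0 := by
      rw [zsmul_eq_mul, ← Int.cast_natCast, ← Int.cast_mul, intCast_zmod_eq_zero_iff_dvd, ← hdm]
      exact ⟨a', by rw [ha']; ring⟩
    rw [smul_comm, ham, smul_zero]

theorem stdAddChar_mul_eq_one_iff {n : ℕ} [NeZero n] (c y : ZMod n) :
    stdAddChar (c * y) = 1 ↔ c * y = 0 := by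
  rw [← (stdAddChar (N := n)).map_zero_eq_one, injective_stdAddChar.eq_iff]

theorem sum_zsmul_eq_zero_stdAddChar {n : ℕ} [NeZero n] (a c : ℤ) :
    ∑ y : ZMod n with a • y = 0, stdAddChar ((c : ZMod n) * y) =
      if (a.gcd n : ℤ) ∣ c then (a.gcd n : ℂ) else 0 := by
  classical
  set d := a.gcd n
  set m := n / d
  have hdm : d * m = n := Nat.mul_div_cancel' (Int.natCast_dvd_natCast.mp (Int.gcd_dvd_right a n))
  have hm : m ≠ 0 := fun h => NeZero.ne n (by rw [← hdm, h, mul_zero])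
  have htriv : (∀ y ∈ AddSubgroup.zmultiples (m : ZMod n), stdAddChar ((c : ZMod n) * y) = 1) ↔
      (d : ℤ) ∣ c := by
    simp only [stdAddChar_mul_eq_one_iff, ← intCast_mul_natCast_eq_zero_iff hdm hm]
    exact AddSubgroup.zmultiples_le (H := (AddMonoidHom.mulLeft (c : ZMod n)).ker)
  have : Fintype (AddSubgroup.zmultiples (m : ZMod n)) := Fintype.ofFinite _
  rw [sum_subtype (F := this) _ fun y => by
    simp only [mem_filter, mem_univ, true_and, zsmul_eq_zero_iff_mem_zmultiples]; rfl]
  simpa only [AddChar.mulShift_apply, htriv, card_zmultiples_natCast hdm] using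
    (stdAddChar.mulShift (c : ZMod n)).sum_addSubgroup_eq_ite (AddSubgroup.zmultiples (m : ZMod n))

end ZMod

theorem mulAut_apply_ofAdd_natCast {R : Type*} [Semiring R] {n : ℕ} {r : R}
    {ψ : Multiplicative (ZMod n) →* MulAut (Multiplicative R)}
    (hψ : ∀ x : R, ψ (ofAdd 1) (ofAdd x) = ofAdd (r * x)) (k : ℕ) (x : R) :
    ψ (ofAdd (k : ZMod n)) (ofAdd x) = ofAdd (r ^ k * x) := by
  induction k generalizing x with
  | zero => simp
  | succ k ih =>
    rw [Nat.cast_succ, ofAdd_add, map_mul, MulAut.mul_apply, hψ, ih, pow_succ, mul_assoc]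

theorem surjective_mul_mulAut_inv {F : Type*} [Field F] {n : ℕ} [NeZero n] {r : Fˣ}
    (hr : orderOf r = n) {ψ : Multiplicative (ZMod n) →* MulAut (Multiplicative F)}
    (hψ : ∀ x : F, ψ (ofAdd 1) (ofAdd x) = ofAdd ((r : F) * x))
    {y : Multiplicative (ZMod n)} (hy : y ≠ 1) :
    Function.Surjective fun w : Multiplicative F => w * ψ y w⁻¹ := by
  set v := (toAdd y).val
  have hyv : y = ofAdd (v : ZMod n) := by rw [ZMod.natCast_zmod_val]; rfl
  have hv : v ≠ 0 := by
    rwa [Ne, ZMod.val_eq_zero, toAdd_eq_zero]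
  have hrv : (1 : F) - r ^ v ≠ 0 := by
    rw [sub_ne_zero, ne_comm, ← Units.val_pow_eq_pow_val, Ne, Units.val_eq_one]
    exact pow_ne_one_of_lt_orderOf hv (hr ▸ ZMod.val_lt _)
  intro x
  refine ⟨ofAdd (toAdd x / (1 - r ^ v)), ?_⟩
  beta_reduce
  rw [hyv, ← ofAdd_neg, mulAut_apply_ofAdd_natCast hψ, ← ofAdd_add]
  refine (congrArg ofAdd ?_).trans (ofAdd_toAdd x)
  field_simp
  ring

theorem coe_zpow_eq_stdAddChar {N : Type*} [Group N] {n : ℕ} [NeZero n]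
    {φ : Multiplicative (ZMod n) →* MulAut N} {t : ℤ}
    {χ : N ⋊[φ] Multiplicative (ZMod n) →* ℂˣ}
    (hχ : ∀ g, (χ g : ℂ) =
      Complex.exp (2 * Real.pi * Complex.I * (t * ((toAdd g.right).val : ℤ)) / n))
    (g : N ⋊[φ] Multiplicative (ZMod n)) (k : ℤ) :
    (χ (g ^ k) : ℂ) = ZMod.stdAddChar (((k * t : ℤ) : ZMod n) * toAdd g.right) := by
  set y := toAdd (SemidirectProduct.rightHom g)
  have hy : ((k * t : ℤ) : ZMod n) * y = ((t * (k • y).val : ℤ) : ZMod n) := by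
    push_cast
    rw [ZMod.natCast_zmod_val, zsmul_eq_mul]
    ring
  rw [hχ, ← SemidirectProduct.rightHom_eq_right, map_zpow, toAdd_zpow, hy, ZMod.stdAddChar_coe]
  push_cast
  rfl

theorem card_filter_zsmul_eq_zero {F : Type*} [Field F] [Fintype F] [DecidableEq F]
    {p h : ℕ} (hp : p.Prime) (hF : Fintype.card F = p ^ h) (a : ℤ) :
    #{x : F | a • x = 0} = Int.gcd a p ^ h := by
  have := Fact.mk hp
  have := charP_of_card_eq_prime_pow hF
  have hgcd : Int.gcd a p = Nat.gcd p a.natAbs := Nat.gcd_comm _ _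
  by_cases hpa : p ∣ a.natAbs
  · have ha : (a : F) = 0 := (CharP.intCast_eq_zero_iff F p a).mpr (Int.natCast_dvd.mpr hpa)
    simp [zsmul_eq_mul, ha, hF, hgcd, Nat.gcd_eq_left hpa]
  · have ha : (a : F) ≠ 0 := fun h =>
      hpa (Int.natCast_dvd.mp ((CharP.intCast_eq_zero_iff F p a).mp h))
    simp [zsmul_eq_mul, ha, hgcd, filter_eq', (Nat.Prime.coprime_iff_not_dvd hp).mpr hpa]

theorem character_sum_semidirect_field_general
    (p h : ℕ) (hp : p.Prime)
    (F : Type) [Field F] [Fintype F] (hF : Fintype.card F = p ^ h)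
    (n : ℕ) (r : Fˣ) (hr : orderOf r = n)
    (ψ : Multiplicative (ZMod n) →* MulAut (Multiplicative F))
    (hψ : ∀ x : F, ψ (ofAdd (1 : ZMod n)) (ofAdd x) = ofAdd ((r : F) * x))
    (t : ℤ)
    (χ : (Multiplicative F ⋊[ψ] Multiplicative (ZMod n)) →* ℂˣ)
    (hχ : ∀ g : Multiplicative F ⋊[ψ] Multiplicative (ZMod n),
      (χ g : ℂ) = Complex.exp (2 * Real.pi * Complex.I * (t * ((toAdd g.right).val : ℤ)) / n))
    (a b : ℤ) :
    (∑ᶠ g ∈ {g : Multiplicative F ⋊[ψ] Multiplicative (ZMod n) | g ^ a = 1},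
        (χ (g ^ (-b)) : ℂ))
      = if (Int.gcd a n : ℤ) ∣ t * b then
          (Int.gcd a p : ℂ) ^ h - (p : ℂ) ^ h + (p : ℂ) ^ h * (Int.gcd a n : ℂ)
        else (Int.gcd a p : ℂ) ^ h - (p : ℂ) ^ h := by
  classical
  have : NeZero n := ⟨hr ▸ (orderOf_pos r).ne'⟩
  have hcard : #{x : Multiplicative F | x ^ a = 1} = Int.gcd a p ^ h := by
    rw [← card_filter_zsmul_eq_zero hp hF a]
    exact card_equiv toAdd fun x => by simp only [mem_filter, zpow_eq_one_iff, mem_univ]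
  have hsum : ∑ y : Multiplicative (ZMod n) with y ^ a = 1,
      ZMod.stdAddChar (((-b * t : ℤ) : ZMod n) * toAdd y) =
        if (Int.gcd a n : ℤ) ∣ t * b then (Int.gcd a n : ℂ) else 0 := by
    have hneg := ZMod.sum_zsmul_eq_zero_stdAddChar (n := n) a (-(t * b))
    simp only [dvd_neg] at hneg
    rw [← hneg, neg_mul, mul_comm b]
    exact sum_equiv toAdd (fun y => by simp only [mem_filter, zpow_eq_one_iff, mem_univ])
      fun _ _ => rfl
  have hsplit := SemidirectProduct.finsum_zpow_eq_one_right
    (fun y hy => surjective_mul_mulAut_inv hr hψ hy) a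
    (fun y => ZMod.stdAddChar (((-b * t : ℤ) : ZMod n) * toAdd y))
  rw [finsum_mem_congr rfl fun g _ => coe_zpow_eq_stdAddChar hχ g (-b), hsplit, hcard, hsum,
    Fintype.card_multiplicative, hF]
  simp only [toAdd_one, mul_zero, AddChar.map_zero_eq_one, mul_one, Nat.cast_pow]
  split_ifs <;> ring

/-- Let `p` be a prime, `h ≥ 1`, let `F` be the field with `p^h`
elements, let `r ∈ Fˣ` have multiplicative order `n`, let `G = F ⋊_r ℤ/nℤ`, and for an
integer `t` let `χ_t : G → ℂˣ` be the homomorphism sending `(x, y)` to `ζ_n^{t·y}`.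
Then for all integers `a, b`, the sum `Σ_{g ∈ G, g^a = 1} χ_t(g^{-b})` equals
`gcd(a,p)^h - p^h + p^h·gcd(a,n)` if `gcd(a,n) ∣ t·b`, and `gcd(a,p)^h - p^h`
otherwise. -/
theorem character_sum_semidirect_field
    (p h : ℕ) (hp : p.Prime) (hh : 1 ≤ h)
    (F : Type) [Field F] [Fintype F] (hF : Fintype.card F = p ^ h)
    (n : ℕ) (r : Fˣ) (hr : orderOf r = n)
    (ψ : Multiplicative (ZMod n) →* MulAut (Multiplicative F))
    (hψ : ∀ x : F, ψ (ofAdd (1 : ZMod n)) (ofAdd x) = ofAdd ((r : F) * x))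
    (t : ℤ)
    (χ : (Multiplicative F ⋊[ψ] Multiplicative (ZMod n)) →* ℂˣ)
    (hχ : ∀ g : Multiplicative F ⋊[ψ] Multiplicative (ZMod n),
      (χ g : ℂ) = Complex.exp (2 * Real.pi * Complex.I * (t * ((toAdd g.right).val : ℤ)) / n))
    (a b : ℤ) :
    (∑ᶠ g ∈ {g : Multiplicative F ⋊[ψ] Multiplicative (ZMod n) | g ^ a = 1},
        (χ (g ^ (-b)) : ℂ))
      = if (Int.gcd a n : ℤ) ∣ t * b then
          (Int.gcd a p : ℂ) ^ h - (p : ℂ) ^ h + (p : ℂ) ^ h * (Int.gcd a n : ℂ)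
        else (Int.gcd a p : ℂ) ^ h - (p : ℂ) ^ h :=
  character_sum_semidirect_field_general p h hp F hF n r hr ψ hψ t χ hχ a b
end
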